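/- arXiv:2506.11303 — 7 statements merged into one kernel-verified Lean document; each statement's English description precedes it below -/
import Mathlib

section
/- Let c ∈ A be a nonzero idempotent. Then the following are equivalent: (a) Q_c(x) = 0 for every x ∈ A; (b) A = Fc ⊕ A_0(c) ⊕ A_{1/2}(c) as an internal direct sum of F-subspaces, and (c,c) = 1. -/
/-- `A_0(z)`: the set of elements `x` with `z * x = 0`. -/
def A0 (F : Type*) {A : Type*} [Field F] [NonUnitalNonAssocCommRing A] [Module F A]
    (z : A) : Set A :=
  {x | z * x = 0}

/-- `A_{1/2}(z)`: the set of elements `x` with `z * x = (1/2) • x`. -/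
def Ahalf (F : Type*) {A : Type*} [Field F] [NonUnitalNonAssocCommRing A] [Module F A]
    (z : A) : Set A :=
  {x | z * x = (1/2 : F) • x}

/-- `w0` is the `A_0(a)`-component of `w` in the decomposition
`A = F•a ⊕ A_0(a) ⊕ A_{1/2}(a)`. -/
def IsZeroPart (F : Type*) {A : Type*} [Field F] [NonUnitalNonAssocCommRing A] [Module F A]
    (a w w0 : A) : Prop :=
  w0 ∈ A0 F a ∧ ∃ (α : F) (wh : A), wh ∈ Ahalf F a ∧ w = α • a + w0 + wh

variable {F A : Type*} [Field F] [NonUnitalNonAssocCommRing A] [Module F A]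
  [SMulCommClass F A A] [IsScalarTower F A A]

/-- `c` is a primitive axis of Jordan type `1/2` with respect to the Frobenius form `B`:
`c` is an idempotent of norm `1`, `A = F•c ⊕ A_0(c) ⊕ A_{1/2}(c)` as an internal direct
sum of `F`-subspaces, and the fusion rules hold. -/
structure IsAxis (B : A →ₗ[F] A →ₗ[F] F) (c : A) : Prop where
  idem : c * c = c
  norm : B c c = 1
  decomp : ∀ x : A, ∃ (α : F) (x0 : A), x0 ∈ A0 F c ∧ ∃ xh ∈ Ahalf F c, x = α • c + x0 + xh
  indep : ∀ (α : F) (x0 xh : A), x0 ∈ A0 F c → xh ∈ Ahalf F c →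
      α • c + x0 + xh = 0 → α = 0 ∧ x0 = 0 ∧ xh = 0
  fusion00 : ∀ x ∈ A0 F c, ∀ y ∈ A0 F c, x * y ∈ A0 F c
  fusion0h : ∀ x ∈ A0 F c, ∀ y ∈ Ahalf F c, x * y ∈ Ahalf F c
  fusionhh : ∀ x ∈ Ahalf F c, ∀ y ∈ Ahalf F c, ∃ (α : F) (z : A), z ∈ A0 F c ∧ x * y = α • c + z


/-
For an idempotent `c`, the operator `x ↦ c * x` acts on `F•c ⊕ A_0(c) ⊕ A_{1/2}(c)`
by the eigenvalues `1, 0, 1/2`, and the Frobenius form makes `A_0(c)` and `A_{1/2}(c)` orthogonal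
to `c`, so `(c, α c + x₀ + x_{1/2}) = α (c, c)`. Hence `Q_c` vanishes on such a decomposition once
`(c, c) = 1`. Conversely, `Q_c(c) = 0` forces `(c, c) = 1`, and for `y := x - (c, x) c` the identity
`Q_c(y) = 0` says that `c` acts on `c y` by `1/2`, which splits `y = (y - 2 c y) + 2 c y`.
-/

theorem one_div_two_ne_one : (1 / 2 : F) ≠ 1 := by
  intro h
  by_cases h2 : (2 : F) = 0
  · simp [h2] at h
  · field_simp at h
    exact one_ne_zero (by linear_combination -h)

section Peirce

variable {c : A}

omit [IsScalarTower F A A]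

section Orthogonality

omit [SMulCommClass F A A]

theorem apply_eq_zero_of_mul_eq_smul (B : A →ₗ[F] A →ₗ[F] F)
    (hfrob : ∀ x y z : A, B (x * y) z = B x (y * z)) (hidem : c * c = c)
    {μ : F} (hμ : μ ≠ 1) {x : A} (hx : c * x = μ • x) : B c x = 0 := by
  have h : B c x = μ * B c x :=
    calc B c x = B (c * c) x := by rw [hidem]
      _ = μ * B c x := by rw [hfrob, hx, map_smul, smul_eq_mul]
  have h' : (1 - μ) * B c x = 0 := by linear_combination h
  exact (mul_eq_zero.1 h').resolve_left (sub_ne_zero.2 hμ.symm)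

theorem apply_eq_zero_of_mem_A0 (B : A →ₗ[F] A →ₗ[F] F)
    (hfrob : ∀ x y z : A, B (x * y) z = B x (y * z)) (hidem : c * c = c)
    {x : A} (hx : x ∈ A0 F c) : B c x = 0 :=
  apply_eq_zero_of_mul_eq_smul B hfrob hidem zero_ne_one (by rw [zero_smul]; exact hx)

theorem apply_eq_zero_of_mem_Ahalf (B : A →ₗ[F] A →ₗ[F] F)
    (hfrob : ∀ x y z : A, B (x * y) z = B x (y * z)) (hidem : c * c = c)
    {x : A} (hx : x ∈ Ahalf F c) : B c x = 0 :=
  apply_eq_zero_of_mul_eq_smul B hfrob hidem one_div_two_ne_one hx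

end Orthogonality

theorem mul_smul_add_add (hidem : c * c = c) (α : F) {x0 xh : A}
    (hx0 : x0 ∈ A0 F c) (hxh : xh ∈ Ahalf F c) :
    c * (α • c + x0 + xh) = α • c + (1 / 2 : F) • xh := by
  rw [mul_add, mul_add, mul_smul_comm, hidem, hx0, hxh, add_zero]

theorem mul_mul_smul_add_add (hidem : c * c = c) (α : F) {x0 xh : A}
    (hx0 : x0 ∈ A0 F c) (hxh : xh ∈ Ahalf F c) :
    c * (c * (α • c + x0 + xh)) = α • c + (1 / 2 : F) • (1 / 2 : F) • xh := by
  rw [mul_smul_add_add hidem α hx0 hxh, mul_add, mul_smul_comm, mul_smul_comm, hidem, hxh]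

theorem smul_add_add_eq_zero (h2 : (2 : F) ≠ 0) (hc : c ≠ 0) (hidem : c * c = c)
    {α : F} {x0 xh : A} (hx0 : x0 ∈ A0 F c) (hxh : xh ∈ Ahalf F c)
    (h : α • c + x0 + xh = 0) : α = 0 ∧ x0 = 0 ∧ xh = 0 := by
  have hc1 := mul_smul_add_add hidem α hx0 hxh
  have hc2 := mul_mul_smul_add_add hidem α hx0 hxh
  rw [h, mul_zero] at hc1
  rw [h, mul_zero, mul_zero] at hc2
  have hxh0 : xh = 0 := by
    have h4 : (1 / 2 : F) • (1 / 2 : F) • xh = 0 := by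
      rw [← sub_eq_zero.2 (hc1.symm.trans hc2)]
      match_scalars
      · linear_combination (2⁻¹ : F) * mul_inv_cancel₀ h2
      · ring
    simpa [h2] using h4
  have hα : α = 0 := by
    rw [hxh0, smul_zero, add_zero] at hc1
    exact (smul_eq_zero.1 hc1.symm).resolve_right hc
  refine ⟨hα, ?_, hxh0⟩
  rwa [hα, hxh0, zero_smul, zero_add, add_zero] at h

-- The paper's `Q_c(x)`.
def peirceQ (B : A →ₗ[F] A →ₗ[F] F) (c x : A) : A :=
  c * (c * x) - (1 / 2 : F) • (c * x + B c x • c)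

omit [SMulCommClass F A A] in
theorem apply_self_eq_one_of_peirceQ_self (B : A →ₗ[F] A →ₗ[F] F) (h2 : (2 : F) ≠ 0)
    (hc : c ≠ 0) (hidem : c * c = c) (hQ : peirceQ B c c = 0) : B c c = 1 := by
  have h : ((1 / 2 : F) * (1 - B c c)) • c = 0 := by
    rw [← hQ, peirceQ, hidem, hidem]
    match_scalars
    linear_combination mul_inv_cancel₀ h2
  have h' := (smul_eq_zero.1 h).resolve_right hc
  rw [mul_eq_zero, sub_eq_zero] at h'
  exact (h'.resolve_left (one_div_ne_zero h2)).symm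

theorem exists_smul_add_add_of_peirceQ_eq_zero (B : A →ₗ[F] A →ₗ[F] F) (h2 : (2 : F) ≠ 0)
    (hBcc : B c c = 1) (x : A) (hQ : peirceQ B c (x - B c x • c) = 0) :
    ∃ (α : F) (x0 : A), x0 ∈ A0 F c ∧ ∃ xh ∈ Ahalf F c, x = α • c + x0 + xh := by
  set y := x - B c x • c
  have hBy : B c y = 0 := by simp [y, hBcc]
  have hcy : c * (c * y) = (1 / 2 : F) • (c * y) := by
    rwa [peirceQ, hBy, zero_smul, add_zero, sub_eq_zero] at hQ
  refine ⟨B c x, y - (2 : F) • (c * y), ?_, (2 : F) • (c * y), ?_, by simp only [y]; abel⟩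
  · change c * _ = 0
    rw [mul_sub, mul_smul_comm, hcy, smul_smul, one_div, mul_inv_cancel₀ h2, one_smul, sub_self]
  · change c * _ = _
    rw [mul_smul_comm, hcy, smul_comm]

theorem peirceQ_smul_add_add (B : A →ₗ[F] A →ₗ[F] F)
    (hfrob : ∀ x y z : A, B (x * y) z = B x (y * z)) (h2 : (2 : F) ≠ 0) (hidem : c * c = c)
    (hBcc : B c c = 1) (α : F) {x0 xh : A} (hx0 : x0 ∈ A0 F c) (hxh : xh ∈ Ahalf F c) :
    peirceQ B c (α • c + x0 + xh) = 0 := by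
  have hB : B c (α • c + x0 + xh) = α := by
    rw [map_add, map_add, map_smul, apply_eq_zero_of_mem_A0 B hfrob hidem hx0,
      apply_eq_zero_of_mem_Ahalf B hfrob hidem hxh, hBcc, smul_eq_mul, mul_one, add_zero, add_zero]
  rw [peirceQ, mul_mul_smul_add_add hidem α hx0 hxh, mul_smul_add_add hidem α hx0 hxh, hB]
  match_scalars
  · linear_combination -α * mul_inv_cancel₀ h2
  · ring

end Peirce

theorem statement0_general (B : A →ₗ[F] A →ₗ[F] F)
    (hfrob : ∀ x y z : A, B (x * y) z = B x (y * z))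
    (h2 : (2 : F) ≠ 0)
    (c : A) (hc : c ≠ 0) (hidem : c * c = c) :
    (∀ x : A, c * (c * x) - (1/2 : F) • (c * x + B c x • c) = 0) ↔
      ((∀ x : A, ∃ (α : F) (x0 : A), x0 ∈ A0 F c ∧ ∃ xh ∈ Ahalf F c, x = α • c + x0 + xh) ∧
        (∀ (α : F) (x0 xh : A), x0 ∈ A0 F c → xh ∈ Ahalf F c →
          α • c + x0 + xh = 0 → α = 0 ∧ x0 = 0 ∧ xh = 0) ∧
        B c c = 1) := by
  constructor
  · intro hQ
    have hBcc := apply_self_eq_one_of_peirceQ_self B h2 hc hidem (hQ c)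
    exact ⟨fun x => exists_smul_add_add_of_peirceQ_eq_zero B h2 hBcc x (hQ _),
      fun _ _ _ hx0 hxh h => smul_add_add_eq_zero h2 hc hidem hx0 hxh h, hBcc⟩
  · rintro ⟨hdec, -, hBcc⟩ x
    obtain ⟨α, x0, hx0, xh, hxh, rfl⟩ := hdec x
    exact peirceQ_smul_add_add B hfrob h2 hidem hBcc α hx0 hxh

theorem statement0 (B : A →ₗ[F] A →ₗ[F] F)
    (hsymm : ∀ x y : A, B x y = B y x)
    (hfrob : ∀ x y z : A, B (x * y) z = B x (y * z))
    (h2 : (2 : F) ≠ 0)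
    (c : A) (hc : c ≠ 0) (hidem : c * c = c) :
    (∀ x : A, c * (c * x) - (1/2 : F) • (c * x + B c x • c) = 0) ↔
      ((∀ x : A, ∃ (α : F) (x0 : A), x0 ∈ A0 F c ∧ ∃ xh ∈ Ahalf F c, x = α • c + x0 + xh) ∧
        (∀ (α : F) (x0 xh : A), x0 ∈ A0 F c → xh ∈ Ahalf F c →
          α • c + x0 + xh = 0 → α = 0 ∧ x0 = 0 ∧ xh = 0) ∧
        B c c = 1) :=
  statement0_general B hfrob h2 c hc hidem
end

section
/- Let c ∈ A be an idempotent with (c,c) = 1. Then c is an axis (a primitive axis of Jordan type 1/2, i.e. A = Fc ⊕ A_0(c) ⊕ A_{1/2}(c) and the fusion rules hold) if and only if P_c(x,y) = 0 for all x, y ∈ A. -/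
variable {F A : Type*} [Field F] [NonUnitalNonAssocCommRing A] [Module F A]
  [SMulCommClass F A A] [IsScalarTower F A A]

/-!
Write `Q_c(x) = c(cx) - ½(cx + (c,x)c)`. Since `P_c(c, y) = 4 Q_c(y)`, the vanishing of `P_c`
on `c × A` says exactly that `L_c (L_c - ½)` kills `x - (c,x)c` for every `x`, i.e. that
`A = Fc + A_0(c) + A_{1/2}(c)`; the sum is direct because `(c, ·)` kills both eigenspaces. On the other pairs of eigenspaces `P_c` reduces to the defect of the
corresponding fusion rule: `P_c(x, y) = c(xy) - (cy)x` for `x ∈ A_0(c)` and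
`P_c(x, y) = c(xy) - (c,xy)c` for `x, y ∈ A_{1/2}(c)`. Bilinearity and symmetry of `P_c`
then give both directions.
-/

set_option linter.unusedSectionVars false

def Pc (B : A →ₗ[F] A →ₗ[F] F) (c x y : A) : A :=
  (4 : F) • ((c * x) * (c * y)) - B c y • (c * x) - (c * y) * x
    - B c x • (c * y) - (c * x) * y - B c (x * y) • c + c * (x * y)

def Qc (B : A →ₗ[F] A →ₗ[F] F) (c x : A) : A :=
  c * (c * x) - (1/2 : F) • (c * x + B c x • c)

section

variable {B : A →ₗ[F] A →ₗ[F] F} {c : A}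

lemma mem_A0 {x : A} : x ∈ A0 F c ↔ c * x = 0 := Iff.rfl

lemma mem_Ahalf {x : A} : x ∈ Ahalf F c ↔ c * x = (1/2 : F) • x := Iff.rfl

lemma Pc_add_left (x x' y : A) : Pc B c (x + x') y = Pc B c x y + Pc B c x' y := by
  simp only [Pc, mul_add, add_mul, map_add, add_smul, smul_add]
  abel

lemma Pc_smul_left (α : F) (x y : A) : Pc B c (α • x) y = α • Pc B c x y := by
  simp only [Pc, mul_smul_comm, smul_mul_assoc, map_smul, smul_eq_mul]
  match_scalars <;> ring

lemma Pc_comm (x y : A) : Pc B c x y = Pc B c y x := by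
  simp only [Pc, mul_comm y x, mul_comm (c * y) (c * x)]
  abel

lemma Pc_add_right (x y y' : A) : Pc B c x (y + y') = Pc B c x y + Pc B c x y' := by
  rw [Pc_comm, Pc_add_left, Pc_comm _ y, Pc_comm _ y']

lemma Pc_smul_right (β : F) (x y : A) : Pc B c x (β • y) = β • Pc B c x y := by
  rw [Pc_comm, Pc_smul_left, Pc_comm]

lemma form_mul_of_idem (hfrob : ∀ x y z : A, B (x * y) z = B x (y * z)) (hidem : c * c = c)
    (x : A) : B c (c * x) = B c x := by
  rw [← hfrob, hidem]

lemma form_eq_zero_of_mem_A0 (hfrob : ∀ x y z : A, B (x * y) z = B x (y * z))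
    (hidem : c * c = c) {x : A} (hx : x ∈ A0 F c) : B c x = 0 := by
  rw [← form_mul_of_idem hfrob hidem, mem_A0.1 hx, map_zero]

lemma form_mul_eq_zero_of_mem_A0 (hfrob : ∀ x y z : A, B (x * y) z = B x (y * z))
    {x : A} (hx : x ∈ A0 F c) (y : A) : B c (x * y) = 0 := by
  rw [← hfrob, mem_A0.1 hx, map_zero, LinearMap.zero_apply]

lemma form_eq_zero_of_mem_Ahalf (hfrob : ∀ x y z : A, B (x * y) z = B x (y * z))
    (hidem : c * c = c) (h2 : (2 : F) ≠ 0) {x : A} (hx : x ∈ Ahalf F c) : B c x = 0 := by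
  have h := form_mul_of_idem hfrob hidem x
  rw [mem_Ahalf.1 hx, map_smul, smul_eq_mul] at h
  field_simp at h
  linear_combination -h

lemma Pc_self_left (hfrob : ∀ x y z : A, B (x * y) z = B x (y * z)) (hidem : c * c = c)
    (hnorm : B c c = 1) (h2 : (2 : F) ≠ 0) (y : A) : Pc B c c y = (4 : F) • Qc B c y := by
  simp only [Pc, Qc, hidem, hnorm, form_mul_of_idem hfrob hidem, mul_comm (c * y) c,
    one_smul]
  match_scalars <;> (field_simp; try ring)

lemma Pc_of_mem_A0 (hfrob : ∀ x y z : A, B (x * y) z = B x (y * z)) (hidem : c * c = c)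
    {x : A} (hx : x ∈ A0 F c) (y : A) : Pc B c x y = c * (x * y) - (c * y) * x := by
  simp only [Pc, mem_A0.1 hx, form_eq_zero_of_mem_A0 hfrob hidem hx,
    form_mul_eq_zero_of_mem_A0 hfrob hx, zero_mul, smul_zero, zero_smul]
  abel

lemma Pc_of_mem_Ahalf (hfrob : ∀ x y z : A, B (x * y) z = B x (y * z)) (hidem : c * c = c)
    (h2 : (2 : F) ≠ 0) {x y : A} (hx : x ∈ Ahalf F c) (hy : y ∈ Ahalf F c) :
    Pc B c x y = c * (x * y) - B c (x * y) • c := by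
  simp only [Pc, mem_Ahalf.1 hx, mem_Ahalf.1 hy, form_eq_zero_of_mem_Ahalf hfrob hidem h2 hx,
    form_eq_zero_of_mem_Ahalf hfrob hidem h2 hy, zero_smul, smul_mul_assoc, mul_smul_comm,
    mul_comm y x]
  match_scalars <;> (field_simp; try ring)

lemma exists_decomp_iff_Qc_eq_zero (hfrob : ∀ x y z : A, B (x * y) z = B x (y * z))
    (hidem : c * c = c) (hnorm : B c c = 1) (h2 : (2 : F) ≠ 0) :
    (∀ x : A, ∃ (α : F) (x0 : A), x0 ∈ A0 F c ∧ ∃ xh ∈ Ahalf F c, x = α • c + x0 + xh) ↔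
      ∀ x : A, Qc B c x = 0 := by
  constructor
  · rintro hdecomp x
    obtain ⟨α, x0, hx0, xh, hxh, rfl⟩ := hdecomp x
    have hcx : c * (α • c + x0 + xh) = α • c + (1/2 : F) • xh := by
      rw [mul_add, mul_add, mul_smul_comm, hidem, mem_A0.1 hx0, mem_Ahalf.1 hxh, add_zero]
    have hB : B c (α • c + x0 + xh) = α := by
      simp only [map_add, map_smul, hnorm, form_eq_zero_of_mem_A0 hfrob hidem hx0,
        form_eq_zero_of_mem_Ahalf hfrob hidem h2 hxh, smul_eq_mul, mul_one, add_zero]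
    rw [Qc, hcx, hB, mul_add, mul_smul_comm, mul_smul_comm, hidem, mem_Ahalf.1 hxh]
    match_scalars <;> (field_simp; try ring)
  · intro hQ x
    have hccx : c * (c * x) = (1/2 : F) • (c * x + B c x • c) := sub_eq_zero.1 (hQ x)
    refine ⟨B c x, x - B c x • c - (2 : F) • (c * x - B c x • c), ?_,
      (2 : F) • (c * x - B c x • c), ?_, by abel⟩
    · rw [mem_A0, mul_sub, mul_sub, mul_smul_comm, mul_smul_comm, mul_sub, hccx,
        mul_smul_comm, hidem]
      match_scalars <;> (field_simp; try ring)
    · rw [mem_Ahalf, mul_smul_comm, mul_sub, hccx, mul_smul_comm, hidem]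
      match_scalars <;> (field_simp; try ring)

lemma eq_zero_of_smul_add_add_eq_zero (hfrob : ∀ x y z : A, B (x * y) z = B x (y * z))
    (hidem : c * c = c) (hnorm : B c c = 1) (h2 : (2 : F) ≠ 0) {α : F} {x0 xh : A}
    (hx0 : x0 ∈ A0 F c) (hxh : xh ∈ Ahalf F c) (h : α • c + x0 + xh = 0) :
    α = 0 ∧ x0 = 0 ∧ xh = 0 := by
  have hα : α = 0 := by
    simpa [hnorm, form_eq_zero_of_mem_A0 hfrob hidem hx0,
      form_eq_zero_of_mem_Ahalf hfrob hidem h2 hxh] using congrArg (B c) h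
  rw [hα, zero_smul, zero_add] at h
  have hxh0 : xh = 0 := by
    simpa [mul_add, mem_A0.1 hx0, mem_Ahalf.1 hxh, h2] using congrArg (c * ·) h
  exact ⟨hα, by simpa [hxh0] using h, hxh0⟩

lemma IsAxis.Pc_eq_zero (hfrob : ∀ x y z : A, B (x * y) z = B x (y * z)) (h2 : (2 : F) ≠ 0)
    (hax : IsAxis B c) (x y : A) : Pc B c x y = 0 := by
  have hQ := (exists_decomp_iff_Qc_eq_zero hfrob hax.idem hax.norm h2).1 hax.decomp
  have hc : ∀ y, Pc B c c y = 0 := fun y => by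
    rw [Pc_self_left hfrob hax.idem hax.norm h2, hQ, smul_zero]
  have h00 : ∀ x ∈ A0 F c, ∀ y ∈ A0 F c, Pc B c x y = 0 := fun x hx y hy => by
    rw [Pc_of_mem_A0 hfrob hax.idem hx, mem_A0.1 (hax.fusion00 x hx y hy), mem_A0.1 hy,
      zero_mul, sub_zero]
  have h0h : ∀ x ∈ A0 F c, ∀ y ∈ Ahalf F c, Pc B c x y = 0 := fun x hx y hy => by
    rw [Pc_of_mem_A0 hfrob hax.idem hx, mem_Ahalf.1 (hax.fusion0h x hx y hy), mem_Ahalf.1 hy,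
      smul_mul_assoc, mul_comm y x, sub_self]
  have hhh : ∀ x ∈ Ahalf F c, ∀ y ∈ Ahalf F c, Pc B c x y = 0 := fun x hx y hy => by
    obtain ⟨γ, z, hz, hxy⟩ := hax.fusionhh x hx y hy
    rw [Pc_of_mem_Ahalf hfrob hax.idem h2 hx hy, hxy, mul_add, mul_smul_comm, hax.idem,
      mem_A0.1 hz, map_add, map_smul, hax.norm, form_eq_zero_of_mem_A0 hfrob hax.idem hz]
    simp
  obtain ⟨α, x0, hx0, xh, hxh, rfl⟩ := hax.decomp x
  obtain ⟨β, y0, hy0, yh, hyh, rfl⟩ := hax.decomp y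
  simp only [Pc_add_left, Pc_add_right, Pc_smul_left, Pc_smul_right, hc, Pc_comm _ c,
    Pc_comm xh y0, h00 _ hx0 _ hy0, h0h _ hx0 _ hyh, h0h _ hy0 _ hxh, hhh _ hxh _ hyh,
    smul_zero, add_zero]

lemma isAxis_of_Pc_eq_zero (hfrob : ∀ x y z : A, B (x * y) z = B x (y * z))
    (hidem : c * c = c) (hnorm : B c c = 1) (h2 : (2 : F) ≠ 0)
    (hP : ∀ x y : A, Pc B c x y = 0) : IsAxis B c where
  idem := hidem
  norm := hnorm
  decomp := (exists_decomp_iff_Qc_eq_zero hfrob hidem hnorm h2).2 fun x => by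
    have h4 : (4 : F) ≠ 0 := by
      have h := mul_ne_zero h2 h2
      norm_num at h
      exact h
    simpa [Pc_self_left hfrob hidem hnorm h2, h4] using hP c x
  indep _ _ _ hx0 hxh h := eq_zero_of_smul_add_add_eq_zero hfrob hidem hnorm h2 hx0 hxh h
  fusion00 x hx y hy := by
    simpa [Pc_of_mem_A0 hfrob hidem hx, mem_A0.1 hy, mem_A0] using hP x y
  fusion0h x hx y hy := by
    have h := hP x y
    rwa [Pc_of_mem_A0 hfrob hidem hx, mem_Ahalf.1 hy, smul_mul_assoc, mul_comm y x,
      sub_eq_zero] at h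
  fusionhh x hx y hy := by
    have h := sub_eq_zero.1 (Pc_of_mem_Ahalf hfrob hidem h2 hx hy ▸ hP x y)
    exact ⟨B c (x * y), x * y - B c (x * y) • c,
      by rw [mem_A0, mul_sub, h, mul_smul_comm, hidem, sub_self], by abel⟩

end

theorem statement1_general (B : A →ₗ[F] A →ₗ[F] F)
    (hfrob : ∀ x y z : A, B (x * y) z = B x (y * z))
    (h2 : (2 : F) ≠ 0)
    (c : A) (hidem : c * c = c) (hnorm : B c c = 1) :
    IsAxis B c ↔
      ∀ x y : A,
        (4 : F) • ((c * x) * (c * y)) - B c y • (c * x) - (c * y) * x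
            - B c x • (c * y) - (c * x) * y - B c (x * y) • c + c * (x * y) = 0 :=
  ⟨fun hax => hax.Pc_eq_zero hfrob h2, isAxis_of_Pc_eq_zero hfrob hidem hnorm h2⟩

theorem statement1 (B : A →ₗ[F] A →ₗ[F] F)
    (hsymm : ∀ x y : A, B x y = B y x)
    (hfrob : ∀ x y z : A, B (x * y) z = B x (y * z))
    (h2 : (2 : F) ≠ 0)
    (c : A) (hidem : c * c = c) (hnorm : B c c = 1) :
    IsAxis B c ↔
      ∀ x y : A,
        (4 : F) • ((c * x) * (c * y)) - B c y • (c * x) - (c * y) * x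
            - B c x • (c * y) - (c * x) * y - B c (x * y) • c + c * (x * y) = 0 :=
  statement1_general B hfrob h2 c hidem hnorm
end

section
/- (Seress' Lemma) Let a ∈ A be an axis. Then a(xy) = (ax)y for every x ∈ A and every y ∈ Fa + A_0(a). -/
variable {F A : Type*} [Field F] [NonUnitalNonAssocCommRing A] [Module F A]
  [SMulCommClass F A A] [IsScalarTower F A A]

theorem statement2 (B : A →ₗ[F] A →ₗ[F] F)
    (hsymm : ∀ x y : A, B x y = B y x)
    (hfrob : ∀ x y z : A, B (x * y) z = B x (y * z))
    (h2 : (2 : F) ≠ 0)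
    (a : A) (ha : IsAxis B a) :
    ∀ (x : A) (β : F) (y0 : A), y0 ∈ A0 F a →
      a * (x * (β • a + y0)) = (a * x) * (β • a + y0) := by
  intro x β y0 hy0
  obtain ⟨α, x0, hx0, xh, hxh, rfl⟩ := ha.decomp x
  have hx0' : a * x0 = 0 := hx0
  have hxh' : a * xh = (1/2 : F) • xh := hxh
  have hy0' : a * y0 = 0 := hy0
  have h00 : a * (x0 * y0) = 0 := ha.fusion00 x0 hx0 y0 hy0
  have h0h : a * (y0 * xh) = (1/2 : F) • (y0 * xh) := ha.fusion0h y0 hy0 xh hxh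
  have haa : a * a = a := ha.idem
  have c1 : x0 * a = 0 := by rw [mul_comm]; exact hx0'
  have c2 : xh * a = (1/2 : F) • xh := by rw [mul_comm]; exact hxh'
  have c3 : y0 * a = 0 := by rw [mul_comm]; exact hy0'
  have c4 : a * (xh * y0) = (1/2 : F) • (xh * y0) := by
    rw [mul_comm xh y0, h0h, mul_comm y0 xh]
  simp only [add_mul, mul_add, smul_mul_assoc, mul_smul_comm, haa, hx0', hxh', hy0',
    c1, c2, c3, h00, c4, smul_zero, zero_add, add_zero, smul_smul]
end

section
/- Let a ∈ A be an axis, let v ∈ A_{1/2}(a), and let x ∈ A with decomposition x = (a,x)a + x_0 + x_{1/2}, where x_0 ∈ A_0(a) and x_{1/2} ∈ A_{1/2}(a). Then [L_a, L_v](x) = a(vx) − v(ax) = (1/2)(v,x)a − (1/2)(v·x_{1/2}) − (1/4)(a,x)v + (1/2)(v·x_0). -/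
variable {F A : Type*} [Field F] [NonUnitalNonAssocCommRing A] [Module F A]
  [SMulCommClass F A A] [IsScalarTower F A A]

theorem statement3 (B : A →ₗ[F] A →ₗ[F] F)
    (hsymm : ∀ x y : A, B x y = B y x)
    (hfrob : ∀ x y z : A, B (x * y) z = B x (y * z))
    (h2 : (2 : F) ≠ 0)
    (a : A) (ha : IsAxis B a) (v : A) (hv : v ∈ Ahalf F a)
    (x x0 xh : A) (hx0 : x0 ∈ A0 F a) (hxh : xh ∈ Ahalf F a)
    (hx : x = B a x • a + x0 + xh) :
    a * (v * x) - v * (a * x) =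
      ((1/2 : F) * B v x) • a - (1/2 : F) • (v * xh)
        - ((1/4 : F) * B a x) • v + (1/2 : F) • (v * x0) := by
  obtain ⟨β, z, hz, hvxh⟩ := ha.fusionhh v hv xh hxh
  have hav : a * v = (1/2:F) • v := hv
  have haxh : a * xh = (1/2:F) • xh := hxh
  have hax0 : a * x0 = (0:A) := hx0
  have haz : a * z = (0:A) := hz
  have haa : a * a = a := ha.idem
  have hvx0 : v * x0 ∈ Ahalf F a := by rw [mul_comm]; exact ha.fusion0h x0 hx0 v hv
  have havx0 : a * (v * x0) = (1/2:F) • (v * x0) := hvx0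
  have hhalf : (2:F) * (1/2:F) = 1 := mul_one_div_cancel h2
  have key : ∀ t : F, t = (1/2:F) * t → t = 0 := by
    intro t ht
    have h' : (2:F) * t = (2:F) * ((1/2:F) * t) := by rw [← ht]
    rw [← mul_assoc, hhalf, one_mul] at h'
    linear_combination h'
  -- B a w = 0 for w ∈ Ahalf
  have hBhalf : ∀ w ∈ Ahalf F a, B a w = 0 := by
    intro w hw
    refine key _ ?_
    conv_lhs => rw [← haa]
    rw [hfrob, hw, map_smul, smul_eq_mul]
  have hBzero : ∀ w ∈ A0 F a, B a w = 0 := by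
    intro w hw
    conv_lhs => rw [← haa]
    rw [hfrob a a w, hw, map_zero]
  have hBvx0 : B v x0 = 0 := by
    have h' := hfrob a v x0
    rw [hav, LinearMap.map_smul₂, smul_eq_mul, hBhalf _ hvx0] at h'
    calc B v x0 = 2 * ((1/2:F) * B v x0) := by rw [← mul_assoc, hhalf, one_mul]
    _ = 0 := by rw [h', mul_zero]
  have hBvxh : (1/2:F) * B v xh = β := by
    have := hfrob a v xh
    rw [hav, LinearMap.map_smul₂, smul_eq_mul, hvxh, map_add, map_smul, smul_eq_mul,
      ha.norm, hBzero _ hz] at this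
    linear_combination this
  have hBvx2 : (1/2:F) * B v x = β := by
    conv_lhs => rw [hx]
    rw [map_add, map_add, map_smul, smul_eq_mul, hsymm v a, hBhalf _ hv, hBvx0]
    linear_combination hBvxh
  have hax : a * x = B a x • a + (1/2:F) • xh := by
    conv_lhs => rw [hx]
    simp only [mul_add, mul_smul_comm, haa, hax0, haxh, add_zero]
  have hvx : v * x = B a x • ((1/2:F) • v) + v * x0 + (β • a + z) := by
    conv_lhs => rw [hx]
    simp only [mul_add, mul_smul_comm, mul_comm v a, hav, hvxh]
  have h1 : a * (v * x) = B a x • ((1/2:F) • ((1/2:F) • v)) + (1/2:F) • (v * x0)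
      + (β • a + (0:A)) := by
    rw [hvx]
    simp only [mul_add, mul_smul_comm, hav, havx0, haa, haz]
  have h3 : v * (a * x) = B a x • ((1/2:F) • v) + (1/2:F) • (β • a + z) := by
    rw [hax]
    simp only [mul_add, mul_smul_comm, mul_comm v a, hav, hvxh]
  rw [h1, h3, hvxh, hBvx2, show (1/4:F) = (1/2:F) * (1/2:F) by
    rw [div_mul_div_comm]; norm_num]
  match_scalars
  · linear_combination (B a x * (1/2:F)) * hhalf
  all_goals ring
end

section
/- Let a, b ∈ A be axes. The following are equivalent: (i) [L_a, L_b] is a derivation of A; (ii) for all x_0, y_0 ∈ A_0(a) and all x_{1/2}, y_{1/2} ∈ A_{1/2}(a): (a) b_{1/2}(x_0 y_0) = (b_{1/2} x_0) y_0 + (b_{1/2} y_0) x_0; (b) (b_{1/2}(x_{1/2} y_0))_0 = (b_{1/2} x_{1/2}) y_0 − ((b_{1/2} y_0) x_{1/2})_0; (c) b_{1/2}(x_{1/2} y_{1/2}) + (b_{1/2} x_{1/2}) y_{1/2} + (b_{1/2} y_{1/2}) x_{1/2} = (1/2)(b, y_{1/2}) x_{1/2} + (1/2)(b, x_{1/2})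 y_{1/2} + (a, x_{1/2} y_{1/2}) b_{1/2}. -/
set_option linter.unusedSectionVars false
set_option maxHeartbeats 1000000

variable {F A : Type*} [Field F] [NonUnitalNonAssocCommRing A] [Module F A]
  [SMulCommClass F A A] [IsScalarTower F A A]

section DopAux

/-- The commutator `[L_a, L_b]` applied to `x`. -/
def Dop {A : Type*} [NonUnitalNonAssocCommRing A] (a b x : A) : A :=
  a * (b * x) - b * (a * x)

lemma Dop_add {A : Type*} [NonUnitalNonAssocCommRing A] (a b x y : A) :
    Dop a b (x + y) = Dop a b x + Dop a b y := by
  simp only [Dop, mul_add]; abel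

lemma Dop_smul (a b : A) (c : F) (x : A) :
    Dop a b (c • x) = c • Dop a b x := by
  simp only [Dop, mul_smul_comm, smul_sub]

/-- The derivation identity at a pair of points. -/
def DerAt {A : Type*} [NonUnitalNonAssocCommRing A] (a b x y : A) : Prop :=
  Dop a b (x * y) = x * Dop a b y + Dop a b x * y

lemma DerAt.addl {a b x₁ x₂ y : A} (h₁ : DerAt a b x₁ y) (h₂ : DerAt a b x₂ y) :
    DerAt a b (x₁ + x₂) y := by
  unfold DerAt at *
  simp only [add_mul, Dop_add, h₁, h₂]
  abel

lemma DerAt.smull {a b x y : A} (c : F) (h : DerAt a b x y) : DerAt a b (c • x) y := by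
  unfold DerAt at *
  simp only [smul_mul_assoc, Dop_smul]
  rw [h, smul_add]

lemma DerAt.symm {a b x y : A} (h : DerAt a b x y) : DerAt a b y x := by
  unfold DerAt at *
  rw [mul_comm y x, h, mul_comm x (Dop a b y), mul_comm (Dop a b x) y, add_comm]

end DopAux

theorem statement4 (B : A →ₗ[F] A →ₗ[F] F)
    (hsymm : ∀ x y : A, B x y = B y x)
    (hfrob : ∀ x y z : A, B (x * y) z = B x (y * z))
    (h2 : (2 : F) ≠ 0)
    (a b : A) (ha : IsAxis B a) (hb : IsAxis B b)
    (b0 bh : A) (hb0 : b0 ∈ A0 F a) (hbh : bh ∈ Ahalf F a)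
    (hbdec : b = B a b • a + b0 + bh) :
    (∀ x y : A,
        a * (b * (x * y)) - b * (a * (x * y)) =
          x * (a * (b * y) - b * (a * y)) + (a * (b * x) - b * (a * x)) * y) ↔
      ((∀ x0 ∈ A0 F a, ∀ y0 ∈ A0 F a,
          bh * (x0 * y0) = (bh * x0) * y0 + (bh * y0) * x0) ∧
        (∀ xh ∈ Ahalf F a, ∀ y0 ∈ A0 F a, ∀ u v : A,
          IsZeroPart F a (bh * (xh * y0)) u → IsZeroPart F a ((bh * y0) * xh) v →
          u = (bh * xh) * y0 - v) ∧
        (∀ xh ∈ Ahalf F a, ∀ yh ∈ Ahalf F a,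
          bh * (xh * yh) + (bh * xh) * yh + (bh * yh) * xh =
            ((1/2 : F) * B b yh) • xh + ((1/2 : F) * B b xh) • yh
              + B a (xh * yh) • bh)) := by
  obtain ⟨haa, hBaa, hadec, haind, hf00, hf0h, hfhh⟩ := ha
  have hb0' : a * b0 = 0 := hb0
  have hbh' : a * bh = (1/2 : F) • bh := hbh
  -- closure facts
  have c0smul : ∀ (c : F) {x : A}, x ∈ A0 F a → c • x ∈ A0 F a := by
    intro c x hx
    have hx' : a * x = 0 := hx
    show a * (c • x) = 0
    rw [mul_smul_comm, hx', smul_zero]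
  have c0sub : ∀ {x y : A}, x ∈ A0 F a → y ∈ A0 F a → x - y ∈ A0 F a := by
    intro x y hx hy
    have hx' : a * x = 0 := hx
    have hy' : a * y = 0 := hy
    show a * (x - y) = 0
    rw [mul_sub, hx', hy', sub_zero]
  have chsub : ∀ {x y : A}, x ∈ Ahalf F a → y ∈ Ahalf F a → x - y ∈ Ahalf F a := by
    intro x y hx hy
    have hx' : a * x = (1/2 : F) • x := hx
    have hy' : a * y = (1/2 : F) • y := hy
    show a * (x - y) = (1/2 : F) • (x - y)
    rw [mul_sub, hx', hy', smul_sub]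
  have ch0 : (0 : A) ∈ Ahalf F a := by
    show a * 0 = (1/2 : F) • (0 : A)
    rw [mul_zero, smul_zero]
  have huniq : ∀ {α₁ α₂ : F} {p₁ q₁ p₂ q₂ : A}, p₁ ∈ A0 F a → q₁ ∈ Ahalf F a →
      p₂ ∈ A0 F a → q₂ ∈ Ahalf F a → α₁ • a + p₁ + q₁ = α₂ • a + p₂ + q₂ →
      α₁ = α₂ ∧ p₁ = p₂ ∧ q₁ = q₂ := by
    intro α₁ α₂ p₁ q₁ p₂ q₂ h1 h2' h3 h4 heq
    obtain ⟨e1, e2, e3⟩ := haind (α₁ - α₂) (p₁ - p₂) (q₁ - q₂) (c0sub h1 h3) (chsub h2' h4)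
      (by linear_combination (norm := module) heq)
    exact ⟨sub_eq_zero.mp e1, sub_eq_zero.mp e2, sub_eq_zero.mp e3⟩
  -- bilinear form facts
  have htwo : ∀ x : F, (2 : F) * ((1/2) * x) = x := by
    intro x; rw [← mul_assoc, mul_one_div, div_self h2, one_mul]
  have hBa0 : ∀ {z : A}, z ∈ A0 F a → B a z = 0 := by
    intro z hz
    have hz' : a * z = 0 := hz
    have h := hfrob a a z
    rw [haa, hz'] at h
    simpa using h
  have hBah : ∀ {w : A}, w ∈ Ahalf F a → B a w = 0 := by
    intro w hw
    have hw' : a * w = (1/2 : F) • w := hw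
    have h := hfrob a a w
    rw [haa, hw', map_smul, smul_eq_mul] at h
    have h3 := congrArg (fun t => (2 : F) * t) h
    rw [htwo] at h3
    linear_combination h3
  have hB0h : ∀ {z w : A}, z ∈ A0 F a → w ∈ Ahalf F a → B z w = 0 := by
    intro z w hz hw
    have hz' : a * z = 0 := hz
    have hw' : a * w = (1/2 : F) • w := hw
    have h := hfrob z a w
    rw [mul_comm z a, hz', hw', map_smul, smul_eq_mul] at h
    simp only [map_zero, LinearMap.zero_apply] at h
    have h3 := congrArg (fun t => (2 : F) * t) h
    simp only [mul_zero] at h3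
    rw [htwo] at h3
    linear_combination -h3
  have hchalf : ∀ {X Y : A}, (1/2 : F) • X = (1/2 : F) • Y → X = Y := by
    intro X Y h
    have h' := congrArg (fun t => (2 : F) • t) h
    simp only [smul_smul] at h'
    rw [show (2 : F) * (1/2) = 1 by rw [mul_one_div]; exact div_self h2, one_smul, one_smul] at h'
    exact h'
  have hBbh : ∀ {w : A}, w ∈ Ahalf F a → B b w = B bh w := by
    intro w hw
    conv_lhs => rw [hbdec]
    simp only [map_add, map_smul, LinearMap.add_apply, LinearMap.smul_apply, smul_eq_mul]
    rw [hBah hw, hB0h hb0 hw, mul_zero, zero_add, zero_add]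
  have hBabh : ∀ {w : A}, w ∈ Ahalf F a → B a (bh * w) = (1/2 : F) * B bh w := by
    intro w hw
    have h := hfrob a bh w
    rw [hbh', map_smul, LinearMap.smul_apply, smul_eq_mul] at h
    exact h.symm
  have hαeq : ∀ {p z : A} {α : F}, z ∈ A0 F a → p = α • a + z → α = B a p := by
    intro p z α hz hp
    rw [hp, map_add, map_smul, smul_eq_mul, hBaa, mul_one, hBa0 hz, add_zero]
  -- Dop formulas
  have hD0 : ∀ {x : A}, x ∈ A0 F a → Dop a b x = (1/2 : F) • (bh * x) := by
    intro x hx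
    have hx' : a * x = 0 := hx
    have h1 : b * x = b0 * x + bh * x := by
      conv_lhs => rw [hbdec]
      rw [add_mul, add_mul, smul_mul_assoc, hx', smul_zero, zero_add]
    have h2a : a * (b0 * x) = 0 := hf00 b0 hb0 x hx
    have h3 : a * (bh * x) = (1/2 : F) • (bh * x) := by
      rw [mul_comm bh x]; exact hf0h x hx bh hbh
    show a * (b * x) - b * (a * x) = _
    rw [hx', mul_zero, sub_zero, h1, mul_add, h2a, h3, zero_add]
  have hDa : Dop a b a = (1/2 : F) • ((1/2 : F) • bh) - (1/2 : F) • bh := by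
    have hab : a * b = B a b • a + (1/2 : F) • bh := by
      conv_lhs => rw [hbdec]
      rw [mul_add, mul_add, mul_smul_comm, haa, hb0', add_zero, hbh']
    show a * (b * a) - b * (a * a) = _
    rw [haa, mul_comm b a, hab, mul_add, mul_smul_comm, haa, mul_smul_comm, hbh']
    module
  have hDh : ∀ {w : A} {α : F} {z : A}, w ∈ Ahalf F a → z ∈ A0 F a → bh * w = α • a + z →
      Dop a b w = α • a - (1/2 : F) • (bh * w) := by
    intro w α z hw hz hbw
    have hw' : a * w = (1/2 : F) • w := hw
    have hz' : a * z = 0 := hz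
    have h1 : b * w = B a b • ((1/2 : F) • w) + b0 * w + bh * w := by
      conv_lhs => rw [hbdec]
      rw [add_mul, add_mul, smul_mul_assoc, hw']
    have h2a : a * (b0 * w) = (1/2 : F) • (b0 * w) := hf0h b0 hb0 w hw
    have h3 : a * (bh * w) = α • a := by
      rw [hbw, mul_add, mul_smul_comm, haa, hz', add_zero]
    show a * (b * w) - b * (a * w) = _
    rw [h1, mul_add, mul_add, h2a, h3, mul_smul_comm (B a b) a ((1/2 : F) • w),
      mul_smul_comm (1/2 : F) a w, hw', mul_smul_comm (1/2 : F) b w, h1]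
    rw [hbw]
    module
  have hD00 : Dop a b (0 : A) = 0 := by
    show a * (b * 0) - b * (a * 0) = 0
    simp
  -- always-valid base cases
  have dAA : DerAt a b a a := by
    show Dop a b (a * a) = a * Dop a b a + Dop a b a * a
    rw [haa, hDa]
    simp only [mul_sub, sub_mul, mul_smul_comm, smul_mul_assoc]
    rw [mul_comm bh a, hbh']
    match_scalars <;> field_simp <;> ring
  have dA0 : ∀ {y : A}, y ∈ A0 F a → DerAt a b a y := by
    intro y hy
    have hy' : a * y = 0 := hy
    have h3 : a * (bh * y) = (1/2 : F) • (bh * y) := by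
      rw [mul_comm bh y]; exact hf0h y hy bh hbh
    show Dop a b (a * y) = a * Dop a b y + Dop a b a * y
    rw [hy', hD00, hD0 hy, hDa]
    simp only [mul_smul_comm, sub_mul, smul_mul_assoc]
    rw [h3]
    match_scalars <;> field_simp <;> ring
  have dAH : ∀ {w : A}, w ∈ Ahalf F a → DerAt a b a w := by
    intro w hw
    obtain ⟨α, z, hz, hbw⟩ := hfhh bh hbh w hw
    have hw' : a * w = (1/2 : F) • w := hw
    have hz' : a * z = 0 := hz
    have h3 : a * (bh * w) = α • a := by
      rw [hbw, mul_add, mul_smul_comm, haa, hz', add_zero]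
    show Dop a b (a * w) = a * Dop a b w + Dop a b a * w
    rw [hw', Dop_smul, hDh hw hz hbw, hDa]
    simp only [mul_sub, sub_mul, mul_smul_comm, smul_mul_assoc, smul_sub]
    rw [h3, haa]
    match_scalars <;> field_simp <;> ring
  constructor
  · intro H
    have H' : ∀ x y : A, Dop a b (x * y) = x * Dop a b y + Dop a b x * y := H
    refine ⟨?_, ?_, ?_⟩
    · -- condition (a)
      intro x hx y hy
      have e := H' x y
      rw [hD0 (hf00 x hx y hy), hD0 hy, hD0 hx, mul_smul_comm, smul_mul_assoc,
        mul_comm x (bh * y)] at e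
      refine hchalf ?_
      linear_combination (norm := module) e
    · -- condition (b)
      intro xh hxh y0 hy0 u v hu hv
      have hxh' : a * xh = (1/2 : F) • xh := hxh
      have hy0' : a * y0 = 0 := hy0
      have hw : xh * y0 ∈ Ahalf F a := by
        show a * (xh * y0) = (1/2 : F) • (xh * y0)
        rw [mul_comm xh y0]
        exact hf0h y0 hy0 xh hxh
      have hby0 : bh * y0 ∈ Ahalf F a := by
        show a * (bh * y0) = (1/2 : F) • (bh * y0)
        rw [mul_comm bh y0]
        exact hf0h y0 hy0 bh hbh
      obtain ⟨γ, u', hu', hbwu⟩ := hfhh bh hbh (xh * y0) hw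
      obtain ⟨δ, v', hv', hbv⟩ := hfhh (bh * y0) hby0 xh hxh
      obtain ⟨αx, zx, hzx, hbx⟩ := hfhh bh hbh xh hxh
      obtain ⟨hu0, αu, wu, hwu, hud⟩ := hu
      obtain ⟨hv0, αv, wv, hwv, hvd⟩ := hv
      obtain ⟨-, huu', -⟩ := huniq hu' ch0 hu0 hwu (by rw [add_zero, ← hbwu]; exact hud)
      obtain ⟨-, hvv', -⟩ := huniq hv' ch0 hv0 hwv (by rw [add_zero, ← hbv]; exact hvd)
      have hw0 : (bh * xh) * y0 ∈ A0 F a := by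
        show a * ((bh * xh) * y0) = 0
        rw [hbx, add_mul, smul_mul_assoc, hy0', smul_zero, zero_add]
        exact hf00 zx hzx y0 hy0
      have e := H' xh y0
      rw [hDh hw hu' hbwu, hD0 hy0, hDh hxh hzx hbx,
        mul_smul_comm (1/2 : F) xh (bh * y0), mul_comm xh (bh * y0), hbv,
        sub_mul, smul_mul_assoc αx a y0, hy0', smul_zero, zero_sub,
        smul_mul_assoc (1/2 : F) (bh * xh) y0, hbwu] at e
      have e2 : (γ - (1/2) * γ) • a + ((-(1/2 : F)) • u') + (0 : A)
          = ((1/2) * δ) • a + ((1/2 : F) • v' - (1/2 : F) • ((bh * xh) * y0)) + (0 : A) := by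
        linear_combination (norm := module) e
      obtain ⟨-, h2', -⟩ := huniq (c0smul _ hu') ch0
        (c0sub (c0smul _ hv') (c0smul _ hw0)) ch0 e2
      rw [← huu', ← hvv']
      refine hchalf ?_
      linear_combination (norm := module) -h2'
    · -- condition (c)
      intro xh hxh yh hyh
      have hxh' : a * xh = (1/2 : F) • xh := hxh
      have hyh' : a * yh = (1/2 : F) • yh := hyh
      obtain ⟨α, z, hz, hxy⟩ := hfhh xh hxh yh hyh
      obtain ⟨αx, zx, hzx, hbx⟩ := hfhh bh hbh xh hxh
      obtain ⟨αy, zy, hzy, hby⟩ := hfhh bh hbh yh hyh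
      have hαy : (1/2 : F) * B b yh = αy := by
        rw [hBbh hyh, ← hBabh hyh]; exact (hαeq hzy hby).symm
      have hαx : (1/2 : F) * B b xh = αx := by
        rw [hBbh hxh, ← hBabh hxh]; exact (hαeq hzx hbx).symm
      have hα : B a (xh * yh) = α := (hαeq hz hxy).symm
      have hzeq : z = xh * yh - α • a := by rw [hxy]; abel
      have hbz : bh * z = bh * (xh * yh) - α • ((1/2 : F) • bh) := by
        rw [hzeq, mul_sub, mul_smul_comm, mul_comm bh a, hbh']
      have E1 : Dop a b (xh * yh)
          = α • ((1/2 : F) • ((1/2 : F) • bh) - (1/2 : F) • bh)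
            + (1/2 : F) • (bh * (xh * yh) - α • ((1/2 : F) • bh)) := by
        calc Dop a b (xh * yh) = Dop a b (α • a + z) := by rw [← hxy]
          _ = α • Dop a b a + Dop a b z := by rw [Dop_add, Dop_smul]
          _ = _ := by rw [hDa, hD0 hz, hbz]
      have E2 : xh * Dop a b yh = αy • ((1/2 : F) • xh) - (1/2 : F) • ((bh * yh) * xh) := by
        rw [hDh hyh hzy hby, mul_sub, mul_smul_comm αy xh a, mul_comm xh a, hxh',
          mul_smul_comm (1/2 : F) xh (bh * yh), mul_comm xh (bh * yh)]
      have E3 : Dop a b xh * yh = αx • ((1/2 : F) • yh) - (1/2 : F) • ((bh * xh) * yh) := by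
        rw [hDh hxh hzx hbx, sub_mul, smul_mul_assoc αx a yh, hyh',
          smul_mul_assoc (1/2 : F) (bh * xh) yh]
      have e := H' xh yh
      rw [E1, E2, E3] at e
      rw [hαy, hαx, hα]
      refine hchalf ?_
      linear_combination (norm := module) e
  · rintro ⟨Ca, Cb, Cc⟩
    have d00 : ∀ {x y : A}, x ∈ A0 F a → y ∈ A0 F a → DerAt a b x y := by
      intro x y hx hy
      show Dop a b (x * y) = x * Dop a b y + Dop a b x * y
      rw [hD0 (hf00 x hx y hy), hD0 hy, hD0 hx, Ca x hx y hy,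
        mul_smul_comm, smul_mul_assoc, mul_comm x (bh * y)]
      module
    have dH0 : ∀ {xh y0 : A}, xh ∈ Ahalf F a → y0 ∈ A0 F a → DerAt a b xh y0 := by
      intro xh y0 hxh hy0
      have hxh' : a * xh = (1/2 : F) • xh := hxh
      have hy0' : a * y0 = 0 := hy0
      have hw : xh * y0 ∈ Ahalf F a := by
        show a * (xh * y0) = (1/2 : F) • (xh * y0)
        rw [mul_comm xh y0]; exact hf0h y0 hy0 xh hxh
      have hby0 : bh * y0 ∈ Ahalf F a := by
        show a * (bh * y0) = (1/2 : F) • (bh * y0)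
        rw [mul_comm bh y0]; exact hf0h y0 hy0 bh hbh
      obtain ⟨γ, u, hu, hbwu⟩ := hfhh bh hbh (xh * y0) hw
      obtain ⟨δ, v, hv, hbv⟩ := hfhh (bh * y0) hby0 xh hxh
      obtain ⟨αx, zx, hzx, hbx⟩ := hfhh bh hbh xh hxh
      have hueq : u = (bh * xh) * y0 - v :=
        Cb xh hxh y0 hy0 u v ⟨hu, γ, 0, ch0, by rw [add_zero]; exact hbwu⟩
          ⟨hv, δ, 0, ch0, by rw [add_zero]; exact hbv⟩
      have hγδ : γ = δ := by
        have hγ : γ = B a (bh * (xh * y0)) := hαeq hu hbwu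
        have hδ : δ = B a ((bh * y0) * xh) := hαeq hv hbv
        rw [hγ, hδ]
        have e1 := hfrob a bh (xh * y0)
        have e2 := hfrob a xh (bh * y0)
        have e3 := hfrob bh y0 xh
        rw [hbh', map_smul, LinearMap.smul_apply, smul_eq_mul] at e1
        rw [hxh', map_smul, LinearMap.smul_apply, smul_eq_mul] at e2
        rw [← e1, mul_comm (bh * y0) xh, ← e2, hsymm xh (bh * y0), e3, mul_comm y0 xh]
      show Dop a b (xh * y0) = xh * Dop a b y0 + Dop a b xh * y0
      rw [hDh hw hu hbwu, hD0 hy0, hDh hxh hzx hbx,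
        mul_smul_comm (1/2 : F) xh (bh * y0), mul_comm xh (bh * y0), hbv,
        sub_mul, smul_mul_assoc αx a y0, hy0', smul_zero, zero_sub,
        smul_mul_assoc (1/2 : F) (bh * xh) y0, hbwu, hueq, hγδ]
      match_scalars <;> field_simp <;> ring
    have dHH : ∀ {xh yh : A}, xh ∈ Ahalf F a → yh ∈ Ahalf F a → DerAt a b xh yh := by
      intro xh yh hxh hyh
      have hxh' : a * xh = (1/2 : F) • xh := hxh
      have hyh' : a * yh = (1/2 : F) • yh := hyh
      obtain ⟨α, z, hz, hxy⟩ := hfhh xh hxh yh hyh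
      obtain ⟨αx, zx, hzx, hbx⟩ := hfhh bh hbh xh hxh
      obtain ⟨αy, zy, hzy, hby⟩ := hfhh bh hbh yh hyh
      have hαy : (1/2 : F) * B b yh = αy := by
        rw [hBbh hyh, ← hBabh hyh]; exact (hαeq hzy hby).symm
      have hαx : (1/2 : F) * B b xh = αx := by
        rw [hBbh hxh, ← hBabh hxh]; exact (hαeq hzx hbx).symm
      have hα : B a (xh * yh) = α := (hαeq hz hxy).symm
      have hzeq : z = xh * yh - α • a := by rw [hxy]; abel
      have hbz : bh * z = bh * (xh * yh) - α • ((1/2 : F) • bh) := by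
        rw [hzeq, mul_sub, mul_smul_comm, mul_comm bh a, hbh']
      have E1 : Dop a b (xh * yh)
          = α • ((1/2 : F) • ((1/2 : F) • bh) - (1/2 : F) • bh)
            + (1/2 : F) • (bh * (xh * yh) - α • ((1/2 : F) • bh)) := by
        calc Dop a b (xh * yh) = Dop a b (α • a + z) := by rw [← hxy]
          _ = α • Dop a b a + Dop a b z := by rw [Dop_add, Dop_smul]
          _ = _ := by rw [hDa, hD0 hz, hbz]
      have E2 : xh * Dop a b yh = αy • ((1/2 : F) • xh) - (1/2 : F) • ((bh * yh) * xh) := by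
        rw [hDh hyh hzy hby, mul_sub, mul_smul_comm αy xh a, mul_comm xh a, hxh',
          mul_smul_comm (1/2 : F) xh (bh * yh), mul_comm xh (bh * yh)]
      have E3 : Dop a b xh * yh = αx • ((1/2 : F) • yh) - (1/2 : F) • ((bh * xh) * yh) := by
        rw [hDh hxh hzx hbx, sub_mul, smul_mul_assoc αx a yh, hyh',
          smul_mul_assoc (1/2 : F) (bh * xh) yh]
      have e := Cc xh hxh yh hyh
      rw [hαy, hαx, hα] at e
      show Dop a b (xh * yh) = xh * Dop a b yh + Dop a b xh * yh
      rw [E1, E2, E3]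
      linear_combination (norm := module) (1/2 : F) • e
    have addr : ∀ {x y₁ y₂ : A}, DerAt a b x y₁ → DerAt a b x y₂ → DerAt a b x (y₁ + y₂) :=
      fun h1 h2 => (DerAt.addl h1.symm h2.symm).symm
    have smulr : ∀ {x y : A} (c : F), DerAt a b x y → DerAt a b x (c • y) :=
      fun c h => (DerAt.smull c h.symm).symm
    have derA : ∀ y : A, DerAt a b a y := by
      intro y
      obtain ⟨η, y0, hy0, yh, hyh, hyd⟩ := hadec y
      rw [hyd]
      exact addr (addr (smulr η dAA) (dA0 hy0)) (dAH hyh)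
    have der0 : ∀ {x : A}, x ∈ A0 F a → ∀ y : A, DerAt a b x y := by
      intro x hx y
      obtain ⟨η, y0, hy0, yh, hyh, hyd⟩ := hadec y
      rw [hyd]
      exact addr (addr (smulr η (dA0 hx).symm) (d00 hx hy0)) ((dH0 hyh hx).symm)
    have derH : ∀ {x : A}, x ∈ Ahalf F a → ∀ y : A, DerAt a b x y := by
      intro x hx y
      obtain ⟨η, y0, hy0, yh, hyh, hyd⟩ := hadec y
      rw [hyd]
      exact addr (addr (smulr η (dAH hx).symm) (dH0 hx hy0)) (dHH hx hyh)
    intro x y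
    obtain ⟨ξ, x0, hx0, xh, hxh, hxd⟩ := hadec x
    have hfin : DerAt a b x y := by
      rw [hxd]
      exact DerAt.addl (DerAt.addl (DerAt.smull ξ (derA y)) (der0 hx0 y)) (derH hxh y)
    exact hfin
end

section
/- Let a, b ∈ A be axes with b = (a,b)a + b_0 + b_{1/2}. Then: (a) (b_{1/2}, b_{1/2}) = (b, b_{1/2}) = 2(a,b)(1 − (a,b)); (b) (b, b_0) = (1 − (a,b))^2; (c) b_0·b_0 = (1 − (a,b)) b_0 and (b_{1/2}·b_{1/2})_0 = (a,b) b_0; (d) b_{1/2}·b_{1/2} = (a,b)(1 − (a,b)) a + (a,b) b_0; (e) b_{1/2}·b_0 = (1/2)(1 − (a,b)) b_{1/2}. -/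
variable {F A : Type*} [Field F] [NonUnitalNonAssocCommRing A] [Module F A]
  [SMulCommClass F A A] [IsScalarTower F A A]

/-! Write `k = (a, b)` and `b = k a + b₀ + b½`. The identity `b b = b` splits into its `a`-,
`A₀(a)`- and `A½(a)`-components, which give the `a`-coefficient of `b½ b½`, the product `b₀ b½`,
and `b₀ b₀ + (b½ b½)₀ = b₀`. The missing piece `(b½ b½)₀ = k b₀` comes from the identity
`b (b x) = ½ b x + ½ (b, x) b`, valid for every axis `b`, applied to `x = a` and read off in
`A₀(a)`. The values of the form follow from `(a, b½ b½) = (a b½, b½)` and `(b, b) = 1`. -/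

variable (F) in
def A0Submodule (z : A) : Submodule F A where
  carrier := A0 F z
  add_mem' {x y} hx hy := show z * (x + y) = 0 by rw [mul_add, hx, hy, add_zero]
  zero_mem' := mul_zero z
  smul_mem' c x hx := show z * (c • x) = 0 by rw [mul_smul_comm, hx, smul_zero]

variable (F) in
def AhalfSubmodule (z : A) : Submodule F A where
  carrier := Ahalf F z
  add_mem' {x y} hx hy := show z * (x + y) = _ by rw [mul_add, hx, hy, smul_add]
  zero_mem' := show z * 0 = _ by rw [mul_zero, smul_zero]
  smul_mem' c x hx := show z * (c • x) = _ by rw [mul_smul_comm, hx, smul_comm]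

section Frobenius

variable {B : A →ₗ[F] A →ₗ[F] F} {c x y : A}

omit [SMulCommClass F A A] [IsScalarTower F A A] in
theorem frob_eq_zero_of_mem_A0 (hfrob : ∀ x y z : A, B (x * y) z = B x (y * z))
    (hc : c * c = c) (hx : x ∈ A0 F c) : B c x = 0 :=
  calc B c x = B (c * c) x := by rw [hc]
    _ = 0 := by rw [hfrob, show c * x = 0 from hx, map_zero]

omit [SMulCommClass F A A] [IsScalarTower F A A] in
theorem frob_eq_zero_of_mem_Ahalf (hfrob : ∀ x y z : A, B (x * y) z = B x (y * z))
    (h2 : (2 : F) ≠ 0) (hc : c * c = c) (hx : x ∈ Ahalf F c) : B c x = 0 := by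
  have h : B c x = (1/2 : F) * B c x :=
    calc B c x = B (c * c) x := by rw [hc]
      _ = (1/2 : F) * B c x := by rw [hfrob, show c * x = _ from hx, map_smul, smul_eq_mul]
  field_simp at h
  linear_combination h

omit [SMulCommClass F A A] [IsScalarTower F A A] in
theorem frob_eq_zero_of_mem_Ahalf_of_mem_A0 (hfrob : ∀ x y z : A, B (x * y) z = B x (y * z))
    (h2 : (2 : F) ≠ 0) (hx : x ∈ Ahalf F c) (hy : y ∈ A0 F c) : B x y = 0 := by
  have h : (1/2 : F) * B x y = 0 :=
    calc (1/2 : F) * B x y = B (c * x) y := by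
          rw [show c * x = _ from hx, map_smul, LinearMap.smul_apply, smul_eq_mul]
      _ = 0 := by rw [mul_comm, hfrob, show c * y = 0 from hy, map_zero]
  simpa [h2] using h

end Frobenius

theorem mul_self_decomp {a b0 bh z : A} {k β : F} (h2 : (2 : F) ≠ 0) (ha : a * a = a)
    (hb0 : b0 ∈ A0 F a) (hbh : bh ∈ Ahalf F a) (hsq : bh * bh = β • a + z) :
    (k • a + b0 + bh) * (k • a + b0 + bh)
      = (k * k + β) • a + (b0 * b0 + z) + (k • bh + (2 : F) • (b0 * bh)) := by
  simp only [mul_add, add_mul, smul_mul_assoc, mul_smul_comm, ha, hsq, mul_comm b0 a,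
    mul_comm bh a, mul_comm bh b0, show a * b0 = 0 from hb0, show a * bh = _ from hbh,
    smul_zero, add_zero]
  match_scalars <;> field_simp <;> ring

namespace IsAxis

variable {B : A →ₗ[F] A →ₗ[F] F} {c : A}

omit [IsScalarTower F A A] in
theorem decomp_unique (hc : IsAxis B c) {α β : F} {x0 y0 xh yh : A}
    (hx0 : x0 ∈ A0 F c) (hy0 : y0 ∈ A0 F c) (hxh : xh ∈ Ahalf F c) (hyh : yh ∈ Ahalf F c)
    (h : α • c + x0 + xh = β • c + y0 + yh) : α = β ∧ x0 = y0 ∧ xh = yh := by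
  have := hc.indep (α - β) (x0 - y0) (xh - yh) ((A0Submodule F c).sub_mem hx0 hy0)
    ((AhalfSubmodule F c).sub_mem hxh hyh)
    (by rw [sub_smul]; linear_combination (norm := module) h)
  simpa only [sub_eq_zero] using this

omit [SMulCommClass F A A] [IsScalarTower F A A] in
theorem frob_decomp (hfrob : ∀ x y z : A, B (x * y) z = B x (y * z)) (h2 : (2 : F) ≠ 0)
    (hc : IsAxis B c) (α : F) {x0 xh : A} (hx0 : x0 ∈ A0 F c) (hxh : xh ∈ Ahalf F c) :
    B c (α • c + x0 + xh) = α := by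
  simp only [map_add, map_smul, smul_eq_mul, hc.norm, frob_eq_zero_of_mem_A0 hfrob hc.idem hx0,
    frob_eq_zero_of_mem_Ahalf hfrob h2 hc.idem hxh, mul_one, add_zero]

omit [IsScalarTower F A A] in
theorem mul_mul_self_left (hfrob : ∀ x y z : A, B (x * y) z = B x (y * z)) (h2 : (2 : F) ≠ 0)
    (hc : IsAxis B c) (x : A) :
    c * (c * x) = (1/2 : F) • (c * x) + ((1/2 : F) * B c x) • c := by
  obtain ⟨α, x0, hx0, xh, hxh, rfl⟩ := hc.decomp x
  rw [hc.frob_decomp hfrob h2 α hx0 hxh]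
  simp only [mul_add, mul_smul_comm, hc.idem, show c * x0 = 0 from hx0,
    show c * xh = _ from hxh, add_zero]
  match_scalars
  · field_simp; ring
  · ring

variable {a b0 bh z : A} {k β : F}

theorem components_of_idempotent (h2 : (2 : F) ≠ 0) (ha : IsAxis B a) (hb0 : b0 ∈ A0 F a)
    (hbh : bh ∈ Ahalf F a) (hz : z ∈ A0 F a) (hsq : bh * bh = β • a + z)
    (hidem : (k • a + b0 + bh) * (k • a + b0 + bh) = k • a + b0 + bh) :
    β = k * (1 - k) ∧ b0 * b0 + z = b0 ∧ b0 * bh = ((1/2 : F) * (1 - k)) • bh := by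
  rw [mul_self_decomp h2 ha.idem hb0 hbh hsq] at hidem
  obtain ⟨hβ, h0, hh⟩ := ha.decomp_unique
    ((A0Submodule F a).add_mem (ha.fusion00 b0 hb0 b0 hb0) hz) hb0
    ((AhalfSubmodule F a).add_mem ((AhalfSubmodule F a).smul_mem k hbh)
      ((AhalfSubmodule F a).smul_mem 2 (ha.fusion0h b0 hb0 bh hbh))) hbh hidem
  refine ⟨by linear_combination hβ, h0, ?_⟩
  linear_combination (norm := match_scalars <;> field_simp <;> ring) (1/2 : F) • hh

theorem zero_part_half_mul_self_eq (hfrob : ∀ x y z : A, B (x * y) z = B x (y * z))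
    (h2 : (2 : F) ≠ 0) (ha : IsAxis B a) {b : A} (hb : IsAxis B b) (hb0 : b0 ∈ A0 F a)
    (hbh : bh ∈ Ahalf F a) (hz : z ∈ A0 F a) (hsq : bh * bh = β • a + z)
    (hbdec : b = k • a + b0 + bh) (hk : B b a = k)
    (hmul : b0 * bh = ((1/2 : F) * (1 - k)) • bh) : z = k • b0 := by
  have hba : b * a = k • a + (1/2 : F) • bh := by
    rw [hbdec]
    simp only [add_mul, smul_mul_assoc, ha.idem, mul_comm b0 a, mul_comm bh a,
      show a * b0 = 0 from hb0, show a * bh = _ from hbh, add_zero]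
  have hbbh : b * bh = β • a + z + (1/2 : F) • bh := by
    rw [hbdec]
    simp only [add_mul, smul_mul_assoc, show a * bh = _ from hbh, hmul, hsq]
    module
  have h := hb.mul_mul_self_left hfrob h2 a
  rw [hba, mul_add, mul_smul_comm, mul_smul_comm, hba, hbbh, hk, hbdec] at h
  have hcomp : (k * k + (1/2 : F) * β) • a + (1/2 : F) • z + ((1/2 : F) * k + 1/4) • bh
      = ((1/2 : F) * k + (1/2 : F) * k * k) • a + ((1/2 : F) * k) • b0
        + ((1/2 : F) * k + 1/4) • bh := by
    linear_combination (norm := match_scalars <;> field_simp <;> ring) h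
  have hsmul := (ha.decomp_unique ((A0Submodule F a).smul_mem _ hz)
    ((A0Submodule F a).smul_mem _ hb0) ((AhalfSubmodule F a).smul_mem _ hbh)
    ((AhalfSubmodule F a).smul_mem _ hbh) hcomp).2.1
  linear_combination (norm := match_scalars <;> field_simp <;> ring) (2 : F) • hsmul

omit [SMulCommClass F A A] [IsScalarTower F A A] in
theorem frob_half_self_eq (hfrob : ∀ x y z : A, B (x * y) z = B x (y * z)) (h2 : (2 : F) ≠ 0)
    (ha : IsAxis B a) (hbh : bh ∈ Ahalf F a) (hz : z ∈ A0 F a) (hsq : bh * bh = β • a + z) :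
    B bh bh = 2 * β := by
  have h := hfrob a bh bh
  rw [show a * bh = _ from hbh, hsq, map_smul, LinearMap.smul_apply, smul_eq_mul, map_add,
    map_smul, smul_eq_mul, ha.norm, frob_eq_zero_of_mem_A0 hfrob ha.idem hz] at h
  field_simp at h
  linear_combination h

end IsAxis

theorem statement5 (B : A →ₗ[F] A →ₗ[F] F)
    (hsymm : ∀ x y : A, B x y = B y x)
    (hfrob : ∀ x y z : A, B (x * y) z = B x (y * z))
    (h2 : (2 : F) ≠ 0)
    (a b : A) (ha : IsAxis B a) (hb : IsAxis B b)
    (b0 bh : A) (hb0 : b0 ∈ A0 F a) (hbh : bh ∈ Ahalf F a)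
    (hbdec : b = B a b • a + b0 + bh) :
    (B bh bh = 2 * B a b * (1 - B a b) ∧ B b bh = 2 * B a b * (1 - B a b)) ∧
      B b b0 = (1 - B a b) ^ 2 ∧
      (b0 * b0 = (1 - B a b) • b0 ∧ IsZeroPart F a (bh * bh) (B a b • b0)) ∧
      bh * bh = (B a b * (1 - B a b)) • a + B a b • b0 ∧
      bh * b0 = ((1/2 : F) * (1 - B a b)) • bh := by
  obtain ⟨β, z, hz, hsq⟩ := ha.fusionhh bh hbh bh hbh
  obtain ⟨hβ, hb0sq, hmul⟩ := ha.components_of_idempotent h2 hb0 hbh hz hsq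
    (by rw [← hbdec]; exact hb.idem)
  have hzk : z = B a b • b0 :=
    ha.zero_part_half_mul_self_eq hfrob h2 hb hb0 hbh hz hsq hbdec (hsymm b a) hmul
  have hBhh : B bh bh = 2 * β := ha.frob_half_self_eq hfrob h2 hbh hz hsq
  have hBbh : B b bh = 2 * β := by
    rw [hbdec]
    simp only [map_add, map_smul, LinearMap.add_apply, LinearMap.smul_apply, smul_eq_mul,
      frob_eq_zero_of_mem_Ahalf hfrob h2 ha.idem hbh, hsymm b0 bh,
      frob_eq_zero_of_mem_Ahalf_of_mem_A0 hfrob h2 hbh hb0, hBhh]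
    ring
  have hBb0 : B b b0 = (1 - B a b) ^ 2 := by
    have h := hb.norm
    nth_rw 1 [hbdec] at h
    simp only [map_add, map_smul, LinearMap.add_apply, LinearMap.smul_apply, smul_eq_mul,
      hsymm b0 b, hsymm bh b, hBbh] at h
    linear_combination h - 2 * hβ
  refine ⟨⟨?_, ?_⟩, hBb0, ⟨?_, ?_⟩, ?_, ?_⟩
  · rw [hBhh, hβ]; ring
  · rw [hBbh, hβ]; ring
  · linear_combination (norm := module) hb0sq - hzk
  · exact ⟨hzk ▸ hz, β, 0, (AhalfSubmodule F a).zero_mem, by rw [hsq, hzk, add_zero]⟩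
  · rw [hsq, hzk, hβ]
  · rw [mul_comm, hmul]
end

section
/- Let a, b ∈ A be axes with b = (a,b)a + b_0 + b_{1/2}. Then for every x_0 ∈ A_0(a): 2(b_{1/2}(b_{1/2} x_0))_0 = x_0 b_0 + (b, x_0) b_0 − 2(x_0 b_0) b_0. -/
variable {F A : Type*} [Field F] [NonUnitalNonAssocCommRing A] [Module F A]
  [SMulCommClass F A A] [IsScalarTower F A A]

/-- The quadratic law for an axis of Jordan type 1/2:
`2 c(cx) = cx + B(c,x) c` for all `x`. -/
lemma quad_law (B : A →ₗ[F] A →ₗ[F] F)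
    (hfrob : ∀ x y z : A, B (x * y) z = B x (y * z))
    (h2 : (2 : F) ≠ 0) {c : A} (hc : IsAxis B c) (x : A) :
    (2 : F) • (c * (c * x)) = c * x + B c x • c := by
  obtain ⟨γ, y0, hy0, yh, hyh, hx⟩ := hc.decomp x
  have hcy0 : c * y0 = 0 := hy0
  have hcyh : c * yh = (1/2 : F) • yh := hyh
  have key21 : (2 : F) * (1/2 : F) = 1 := by rw [mul_one_div]; exact div_self h2
  have half2 : ∀ v : A, (2 : F) • ((1/2 : F) • v) = v := by
    intro v; rw [smul_smul, key21, one_smul]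
  have hBy0 : B c y0 = 0 := by
    have h := hfrob c c y0
    rw [hc.idem, hcy0, map_zero] at h
    exact h
  have hByh : B c yh = 0 := by
    have h' := hfrob c c yh
    rw [hc.idem, hcyh, map_smul, smul_eq_mul] at h'
    have h'' : (2 : F) * B c yh = (2 : F) * ((1/2 : F) * B c yh) := by rw [← h']
    rw [← mul_assoc, key21, one_mul] at h''
    linear_combination h''
  have hBx : B c x = γ := by
    rw [hx]
    simp [map_add, map_smul, hBy0, hByh, hc.norm, smul_eq_mul]
  have hcx : c * x = γ • c + (1/2 : F) • yh := by
    rw [hx, mul_add, mul_add, mul_smul_comm, hc.idem, hcy0, hcyh, add_zero]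
  have hccx : c * (c * x) = γ • c + (1/2 : F) • ((1/2 : F) • yh) := by
    rw [hcx, mul_add, mul_smul_comm, mul_smul_comm, hc.idem, hcyh]
  rw [hccx, hcx, hBx, smul_add, half2]
  module

theorem statement6 (B : A →ₗ[F] A →ₗ[F] F)
    (hsymm : ∀ x y : A, B x y = B y x)
    (hfrob : ∀ x y z : A, B (x * y) z = B x (y * z))
    (h2 : (2 : F) ≠ 0)
    (a b : A) (ha : IsAxis B a) (hb : IsAxis B b)
    (b0 bh : A) (hb0 : b0 ∈ A0 F a) (hbh : bh ∈ Ahalf F a)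
    (hbdec : b = B a b • a + b0 + bh)
    (x0 : A) (hx0 : x0 ∈ A0 F a)
    (w : A) (hw : IsZeroPart F a (bh * (bh * x0)) w) :
    (2 : F) • w = x0 * b0 + B b x0 • b0 - (2 : F) • ((x0 * b0) * b0) := by
  obtain ⟨hwA0, γ, zh, hzh, hdec⟩ := hw
  have key21 : (2 : F) * (1/2 : F) = 1 := by rw [mul_one_div]; exact div_self h2
  have half2 : ∀ v : A, (2 : F) • ((1/2 : F) • v) = v := by
    intro v; rw [smul_smul, key21, one_smul]
  -- basic multiplication facts
  have hax0 : a * x0 = 0 := hx0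
  have hab0 : a * b0 = 0 := hb0
  have habh : a * bh = (1/2 : F) • bh := hbh
  have haw : a * w = 0 := hwA0
  have hazh : a * zh = (1/2 : F) • zh := hzh
  have hb0x0 : b0 * x0 ∈ A0 F a := ha.fusion00 b0 hb0 x0 hx0
  have hbhx0 : bh * x0 ∈ Ahalf F a := by
    have h := ha.fusion0h x0 hx0 bh hbh
    show a * (bh * x0) = (1/2 : F) • (bh * x0)
    rw [mul_comm bh x0]; exact h
  have hb00 : b0 * (b0 * x0) ∈ A0 F a := ha.fusion00 b0 hb0 _ hb0x0
  have hb0h : b0 * (bh * x0) ∈ Ahalf F a := ha.fusion0h b0 hb0 _ hbhx0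
  have hhb0 : bh * (b0 * x0) ∈ Ahalf F a := by
    have h := ha.fusion0h (b0 * x0) hb0x0 bh hbh
    show a * (bh * (b0 * x0)) = (1/2 : F) • (bh * (b0 * x0))
    rw [mul_comm bh (b0 * x0)]; exact h
  have hb0x0' : a * (b0 * x0) = 0 := hb0x0
  have hbhx0' : a * (bh * x0) = (1/2 : F) • (bh * x0) := hbhx0
  have hb00' : a * (b0 * (b0 * x0)) = 0 := hb00
  have hb0h' : a * (b0 * (bh * x0)) = (1/2 : F) • (b0 * (bh * x0)) := hb0h
  have hhb0' : a * (bh * (b0 * x0)) = (1/2 : F) • (bh * (b0 * x0)) := hhb0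
  -- the quadratic law for b
  have keyb := quad_law B hfrob h2 hb x0
  set α := B a b with hα
  set β := B b x0 with hβ
  -- expand b * x0
  have e1 : b * x0 = b0 * x0 + bh * x0 := by
    conv_lhs => rw [hbdec]
    rw [add_mul, add_mul, smul_mul_assoc, hax0, smul_zero, zero_add]
  -- expand b * (b * x0)
  have e2 : b * (b * x0) = α • ((1/2 : F) • (bh * x0)) +
      (b0 * (b0 * x0) + b0 * (bh * x0) + bh * (b0 * x0)) + (γ • a + w + zh) := by
    conv_lhs => rw [e1, hbdec]
    rw [add_mul, add_mul, smul_mul_assoc, mul_add a, mul_add b0, mul_add bh,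
      hb0x0', hbhx0', hdec, zero_add]
    module
  have E : (2 : F) • (b * (b * x0)) = α • (bh * x0) + (2 : F) • (b0 * (b0 * x0)) +
      (2 : F) • (b0 * (bh * x0)) + (2 : F) • (bh * (b0 * x0)) +
      ((2 * γ : F) • a + (2 : F) • w + (2 : F) • zh) := by
    rw [e2, smul_add, smul_add, smul_comm (2 : F) α, half2]
    module
  have E2 : α • (bh * x0) + (2 : F) • (b0 * (b0 * x0)) +
      (2 : F) • (b0 * (bh * x0)) + (2 : F) • (bh * (b0 * x0)) +
      ((2 * γ : F) • a + (2 : F) • w + (2 : F) • zh) =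
      b0 * x0 + bh * x0 + β • (α • a + b0 + bh) := by
    calc _ = (2 : F) • (b * (b * x0)) := E.symm
      _ = b * x0 + β • b := keyb
      _ = b0 * x0 + bh * x0 + β • (α • a + b0 + bh) := by rw [e1, hbdec]
  -- collect into a + A0-part + Ahalf-part
  have main0 : ((2 * γ : F) - β * α) • a +
      ((2 : F) • (b0 * (b0 * x0)) + (2 : F) • w - b0 * x0 - β • b0) +
      (α • (bh * x0) + (2 : F) • (b0 * (bh * x0)) + (2 : F) • (bh * (b0 * x0)) +
        (2 : F) • zh - bh * x0 - β • bh) = 0 := by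
    calc _ = (α • (bh * x0) + (2 : F) • (b0 * (b0 * x0)) +
          (2 : F) • (b0 * (bh * x0)) + (2 : F) • (bh * (b0 * x0)) +
          ((2 * γ : F) • a + (2 : F) • w + (2 : F) • zh)) -
          (b0 * x0 + bh * x0 + β • (α • a + b0 + bh)) := by module
      _ = 0 := by rw [E2, sub_self]
  have memP : (2 : F) • (b0 * (b0 * x0)) + (2 : F) • w - b0 * x0 - β • b0 ∈ A0 F a := by
    show a * _ = 0
    rw [mul_sub, mul_sub, mul_add, mul_smul_comm, mul_smul_comm, mul_smul_comm,
      hb00', haw, hb0x0', hab0]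
    simp
  have memQ : α • (bh * x0) + (2 : F) • (b0 * (bh * x0)) + (2 : F) • (bh * (b0 * x0)) +
      (2 : F) • zh - bh * x0 - β • bh ∈ Ahalf F a := by
    show a * _ = (1/2 : F) • _
    rw [mul_sub, mul_sub, mul_add, mul_add, mul_add, mul_smul_comm, mul_smul_comm,
      mul_smul_comm, mul_smul_comm, mul_smul_comm,
      hbhx0', hb0h', hhb0', hazh, habh]
    module
  obtain ⟨-, hP, -⟩ := ha.indep _ _ _ memP memQ main0
  rw [mul_comm x0 b0, mul_comm (b0 * x0) b0]
  calc (2 : F) • w = ((2 : F) • (b0 * (b0 * x0)) + (2 : F) • w - b0 * x0 - β • b0) +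
        (b0 * x0 + β • b0 - (2 : F) • (b0 * (b0 * x0))) := by module
    _ = b0 * x0 + β • b0 - (2 : F) • (b0 * (b0 * x0)) := by rw [hP, zero_add]
end
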